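/- arXiv:1707.03022 — 5 statements merged into one kernel-verified Lean document; each statement's English description precedes it below -/
import Mathlib

section
/- For integers m, n, k with m, n ≥ 0 and 0 ≤ k ≤ min(m, n), one has c_{m,n,k}(m, n−k) = (-1)^k · C(m+n−2k, m−k). (This computes the scalar relating the lowest weight vector f^{m+n−2k}φ_{m,n,k} of V(m+n−2k) in V(m)⊗V(n) to the alternating-sign vector (1, −1, 1, …, (−1)^k).) -/
/-!
Write `m = a + k` and `n = b + k`. By trinomial revision the `l`-th term of `c_{m,n,k}(m, b)` is
`(-1)^l C(a+b, a) C(b, k-l) C(b+l, l)`, and since `(-1)^l C(b+l, l)` is the binomial coefficient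
`C(-(b+1), l)`, Chu–Vandermonde evaluates `∑_l (-1)^l C(b+l, l) C(b, k-l)` as `C(-1, k) = (-1)^k`.
-/

/-- Binomial coefficient for integer arguments: `C a b = a.choose b` when
`0 ≤ b ≤ a`, and `0` otherwise. -/
def C (a b : ℤ) : ℤ := if 0 ≤ b ∧ b ≤ a then (a.toNat.choose b.toNat : ℤ) else 0

/-- The coordinate function `c_{m,n,k}(i,j)`. -/
def c (m n k i j : ℤ) : ℤ :=
  ∑ l ∈ Finset.range (k.toNat + 1),
    (-1 : ℤ) ^ l * C (i + j - k) (i - l) * C (m - l) (k - l) * C (n - k + l) l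

open Finset

lemma C_natCast (a b : ℕ) : C a b = a.choose b := by
  unfold C
  split_ifs with h
  · simp
  · rw [Nat.choose_eq_zero_of_lt (by omega), Nat.cast_zero]

lemma Nat.add_choose_add_mul_choose (a b j : ℕ) :
    (a + b).choose (a + j) * (a + j).choose j = (a + b).choose a * b.choose j := by
  rw [← Nat.choose_symm_add (a := a) (b := j), Nat.choose_mul (Nat.le_add_right a j),
    Nat.add_sub_cancel_left, Nat.add_sub_cancel_left]

lemma sum_range_neg_one_pow_mul_add_choose_mul_choose (b k : ℕ) :
    ∑ l ∈ range (k + 1), (-1 : ℤ) ^ l * (b + l).choose l * b.choose (k - l) = (-1) ^ k := by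
  have choose_neg_succ : ∀ i : ℕ, Ring.choose (-((b : ℤ) + 1)) i = (-1) ^ i * (b + i).choose i := by
    intro i
    rw [Ring.choose_neg, Units.smul_def, Int.coe_negOnePow_natCast, smul_eq_mul,
      add_right_comm, add_sub_cancel_right, ← Nat.cast_add, Ring.choose_natCast]
  have vandermonde := Ring.add_choose_eq (r := -((b : ℤ) + 1)) (s := (b : ℤ)) k (Commute.all _ _)
  rw [Nat.sum_antidiagonal_eq_sum_range_succ
    (fun i j => Ring.choose (-((b : ℤ) + 1)) i * Ring.choose (b : ℤ) j)] at vandermonde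
  simp only [choose_neg_succ, Ring.choose_natCast] at vandermonde
  rw [← vandermonde, show -((b : ℤ) + 1) + b = -1 by ring, Ring.choose_neg, Units.smul_def,
    Int.coe_negOnePow_natCast, smul_eq_mul, add_sub_cancel_left, Ring.choose_natCast,
    Nat.choose_self, Nat.cast_one, mul_one]

lemma c_lowest_weight_natCast (a b k : ℕ) :
    c (a + k) (b + k) k (a + k) b = (-1) ^ k * (a + b).choose a := by
  unfold c
  rw [Int.toNat_natCast]
  calc _ = ∑ l ∈ range (k + 1),
        ((a + b).choose a : ℤ) * ((-1) ^ l * (b + l).choose l * b.choose (k - l)) := by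
        refine sum_congr rfl fun l hl => ?_
        have hlk : l ≤ k := Nat.lt_succ_iff.mp (mem_range.mp hl)
        have e1 : (a : ℤ) + k + b - k = ((a + b : ℕ) : ℤ) := by push_cast; ring
        have e2 : (a : ℤ) + k - l = ((a + (k - l) : ℕ) : ℤ) := by push_cast [hlk]; ring
        have e3 : (k : ℤ) - l = ((k - l : ℕ) : ℤ) := by push_cast [hlk]; ring
        have e4 : (b : ℤ) + k - k + l = ((b + l : ℕ) : ℤ) := by push_cast; ring
        rw [e1, e2, e3, e4, C_natCast, C_natCast, C_natCast]
        have revision := congrArg (Nat.cast (R := ℤ)) (Nat.add_choose_add_mul_choose a b (k - l))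
        push_cast at revision
        linear_combination ((-1) ^ l * ((b + l).choose l : ℤ)) * revision
    _ = _ := by rw [← mul_sum, sum_range_neg_one_pow_mul_add_choose_mul_choose, mul_comm]

theorem lowest_weight_vector_scalar_general (m n k : ℤ)
    (hk0 : 0 ≤ k) (hkm : k ≤ m) (hkn : k ≤ n) :
    c m n k m (n - k) = (-1 : ℤ) ^ k.toNat * C (m + n - 2 * k) (m - k) := by
  lift k to ℕ using hk0
  obtain ⟨a, rfl⟩ : ∃ a : ℕ, m = a + k := ⟨(m - k).toNat, by omega⟩
  obtain ⟨b, rfl⟩ : ∃ b : ℕ, n = b + k := ⟨(n - k).toNat, by omega⟩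
  rw [add_sub_cancel_right, c_lowest_weight_natCast, Int.toNat_natCast, add_sub_cancel_right,
    show (a : ℤ) + k + (b + k) - 2 * k = ((a + b : ℕ) : ℤ) by push_cast; ring, C_natCast]

theorem lowest_weight_vector_scalar (m n k : ℤ)
    (hm : 0 ≤ m) (hn : 0 ≤ n) (hk0 : 0 ≤ k) (hkm : k ≤ m) (hkn : k ≤ n) :
    c m n k m (n - k) = (-1 : ℤ) ^ k.toNat * C (m + n - 2 * k) (m - k) :=
  lowest_weight_vector_scalar_general m n k hk0 hkm hkn
end

section
/- (Reverse recurrence.) For integers m, n, k with m, n ≥ 0 and 0 ≤ k ≤ min(m, n), and integers i, j with 0 ≤ i ≤ m, 0 ≤ j ≤ n and k ≤ i+j ≤ m+n−k−1, setting i' = i+j−k one has (i'+1)·(m+n−2k−i')·c_{m,n,k}(i, j) = (i+1)·(m−i)·c_{m,n,k}(i+1, j) + (j+1)·(n−j)·c_{m,n,k}(i, j+1). -/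
set_option maxHeartbeats 1000000

lemma C_of_neg {a b : ℤ} (h : b < 0) : C a b = 0 := by
  unfold C; rw [if_neg (by omega)]

lemma C_of_gt {a b : ℤ} (h : a < b) : C a b = 0 := by
  unfold C; rw [if_neg (by omega)]

lemma C_self {a : ℤ} (h : 0 ≤ a) : C a a = 1 := by
  unfold C; rw [if_pos ⟨h, le_refl a⟩]; simp

lemma C_zero {a : ℤ} (h : 0 ≤ a) : C a 0 = 1 := by
  unfold C; rw [if_pos ⟨le_refl 0, h⟩]; simp

/-- Universal absorption identity 1. -/
lemma CL1 (a b : ℤ) : (b + 1) * C (a + 1) (b + 1) = (a + 1) * C a b := by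
  by_cases hb : 0 ≤ b ∧ b ≤ a
  · unfold C
    rw [if_pos ⟨by omega, by omega⟩, if_pos hb]
    obtain ⟨hb0, hba⟩ := hb
    have ha0 : 0 ≤ a := le_trans hb0 hba
    rw [show (a + 1).toNat = a.toNat + 1 by omega, show (b + 1).toNat = b.toNat + 1 by omega]
    have h := Nat.add_one_mul_choose_eq a.toNat b.toNat
    have h' : ((a.toNat + 1) * a.toNat.choose b.toNat : ℤ)
        = ((a.toNat + 1).choose (b.toNat + 1) * (b.toNat + 1) : ℤ) := by exact_mod_cast h
    have ca : (a : ℤ) + 1 = (a.toNat : ℤ) + 1 := by omega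
    have cb : (b : ℤ) + 1 = (b.toNat : ℤ) + 1 := by omega
    rw [ca, cb]
    linarith [h']
  · unfold C
    rw [if_neg hb]
    by_cases hc : 0 ≤ b + 1 ∧ b + 1 ≤ a + 1
    · have hb1 : b = -1 := by omega
      rw [hb1]; ring
    · rw [if_neg hc]; ring

/-- Universal absorption identity 2. -/
lemma CL2 (a b : ℤ) : (a + 1 - b) * C (a + 1) b = (a + 1) * C a b := by
  by_cases hb : 0 ≤ b ∧ b ≤ a
  · unfold C
    rw [if_pos ⟨by omega, by omega⟩, if_pos hb]
    obtain ⟨hb0, hba⟩ := hb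
    have ha0 : 0 ≤ a := le_trans hb0 hba
    rw [show (a + 1).toNat = a.toNat + 1 by omega]
    have h := Nat.choose_mul_succ_eq a.toNat b.toNat
    have h' : (a.toNat.choose b.toNat * (a.toNat + 1) : ℤ)
        = ((a.toNat + 1).choose b.toNat * ((a.toNat + 1 - b.toNat : ℕ)) : ℤ) := by
      exact_mod_cast h
    have hsub : ((a.toNat + 1 - b.toNat : ℕ) : ℤ) = (a.toNat : ℤ) + 1 - b.toNat := by omega
    rw [hsub] at h'
    have ca : (a : ℤ) + 1 - b = (a.toNat : ℤ) + 1 - b.toNat := by omega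
    have ca' : (a : ℤ) + 1 = (a.toNat : ℤ) + 1 := by omega
    rw [ca, ca']
    linarith [h']
  · unfold C
    rw [if_neg hb]
    by_cases hc : 0 ≤ b ∧ b ≤ a + 1
    · have hb1 : b = a + 1 := by omega
      rw [hb1]; ring
    · rw [if_neg hc]; ring

theorem reverse_recurrence (m n k i j : ℤ)
    (hm : 0 ≤ m) (hn : 0 ≤ n) (hk0 : 0 ≤ k) (hkm : k ≤ m) (hkn : k ≤ n)
    (hi0 : 0 ≤ i) (him : i ≤ m) (hj0 : 0 ≤ j) (hjn : j ≤ n)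
    (hij1 : k ≤ i + j) (hij2 : i + j ≤ m + n - k - 1) :
    ((i + j - k) + 1) * (m + n - 2 * k - (i + j - k)) * c m n k i j =
    (i + 1) * (m - i) * c m n k (i + 1) j + (j + 1) * (n - j) * c m n k i (j + 1) := by
  -- the telescoping certificate
  set f : ℕ → ℤ := fun l =>
    -((-1 : ℤ) ^ l * l * (m + 1 - l) * C (i + j - k + 1) (i + 1 - l)
        * C (m - l) (k - l) * C (n - k + l) l) with hf
  have key : ∀ l ∈ Finset.range (k.toNat + 1),
      (i + j - k + 1) * (m + n - 2 * k - (i + j - k)) *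
          ((-1 : ℤ) ^ l * C (i + j - k) (i - l) * C (m - l) (k - l) * C (n - k + l) l)
        - ((i + 1) * (m - i) *
            ((-1 : ℤ) ^ l * C (i + j - k + 1) (i + 1 - l) * C (m - l) (k - l) * C (n - k + l) l)
          + (j + 1) * (n - j) *
            ((-1 : ℤ) ^ l * C (i + j - k + 1) (i - l) * C (m - l) (k - l) * C (n - k + l) l))
        = f l - f (l + 1) := by
    intro l hl
    simp only [Finset.mem_range] at hl
    have hlk : (l : ℤ) ≤ k := by omega
    rw [hf]
    simp only [pow_succ, Nat.cast_add, Nat.cast_one]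
    rw [show i + 1 - ((l : ℤ) + 1) = i - l by ring,
        show m - ((l : ℤ) + 1) = m - l - 1 by ring,
        show k - ((l : ℤ) + 1) = k - l - 1 by ring,
        show n - k + ((l : ℤ) + 1) = n - k + l + 1 by ring,
        show (i : ℤ) + 1 - l = i - l + 1 by ring]
    set X := C (i + j - k) (i - (l : ℤ)) with hX
    set Y := C (i + j - k + 1) (i - (l : ℤ) + 1) with hY
    set Z := C (i + j - k + 1) (i - (l : ℤ)) with hZ
    set P := C (m - (l : ℤ)) (k - (l : ℤ)) with hP
    set Q := C (n - k + (l : ℤ)) (l : ℤ) with hQ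
    set P' := C (m - (l : ℤ) - 1) (k - (l : ℤ) - 1) with hP'
    set Q' := C (n - k + (l : ℤ) + 1) ((l : ℤ) + 1) with hQ'
    have e1 : ((l : ℤ) + 1) * Q' = (n - k + l + 1) * Q := CL1 (n - k + l) l
    have e2 : (k - (l : ℤ)) * P = (m - l) * P' := by
      have h := CL1 (m - (l : ℤ) - 1) (k - (l : ℤ) - 1)
      rw [show m - (l : ℤ) - 1 + 1 = m - l by ring,
          show k - (l : ℤ) - 1 + 1 = k - l by ring] at h
      exact h
    have star : (i + j - k + 1) * (m + n - 2 * k - (i + j - k)) * X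
        = ((i + 1) * (m - i) - l * (m + 1 - l)) * Y
          + ((j + 1) * (n - j) - (k - l) * (n - k + l + 1)) * Z := by
      have r1 : (i - (l : ℤ) + 1) * Y = (i + j - k + 1) * X := CL1 (i + j - k) (i - l)
      have r2 : (i + j - k + 1 - (i - (l : ℤ))) * Z = (i + j - k + 1) * X := CL2 (i + j - k) (i - l)
      by_cases h1 : i - (l : ℤ) + 1 = 0
      · have hx : X = 0 := by rw [hX]; exact C_of_neg (by omega)
        have hz : Z = 0 := by rw [hZ]; exact C_of_neg (by omega)
        have hy : Y = 1 := by
          rw [hY, show i - (l : ℤ) + 1 = 0 from h1]; exact C_zero (by omega)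
        rw [hx, hz, hy, show (l : ℤ) = i + 1 by omega]; ring
      · by_cases h2 : i + j - k + 1 - (i - (l : ℤ)) = 0
        · have hx : X = 0 := by rw [hX]; exact C_of_gt (by omega)
          have hy : Y = 0 := by rw [hY]; exact C_of_gt (by omega)
          have hz : Z = 1 := by
            rw [hZ, show i - (l : ℤ) = i + j - k + 1 by omega]; exact C_self (by omega)
          rw [hx, hy, hz, show (l : ℤ) = k - j - 1 by omega]; ring
        · have hne : (i - (l : ℤ) + 1) * (i + j - k + 1 - (i - (l : ℤ))) ≠ 0 :=
            mul_ne_zero h1 h2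
          apply mul_left_cancel₀ hne
          linear_combination (-(i + j - k + 1 - (i - (l : ℤ))) * ((i + 1) * (m - i) - l * (m + 1 - l))) * r1
            + (-(i - (l : ℤ) + 1) * ((j + 1) * (n - j) - (k - l) * (n - k + l + 1))) * r2
    linear_combination ((-1 : ℤ) ^ l * P * Q) * star
      + ((-1 : ℤ) ^ l * (m - l) * P' * Z) * e1
      - ((-1 : ℤ) ^ l * (n - k + l + 1) * Q * Z) * e2
  have hc1 : c m n k (i + 1) j = ∑ l ∈ Finset.range (k.toNat + 1),
      (-1 : ℤ) ^ l * C (i + j - k + 1) (i + 1 - l) * C (m - l) (k - l) * C (n - k + l) l := by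
    unfold c
    refine Finset.sum_congr rfl fun l _ => ?_
    rw [show i + 1 + j - k = i + j - k + 1 by ring]
  have hc2 : c m n k i (j + 1) = ∑ l ∈ Finset.range (k.toNat + 1),
      (-1 : ℤ) ^ l * C (i + j - k + 1) (i - l) * C (m - l) (k - l) * C (n - k + l) l := by
    unfold c
    refine Finset.sum_congr rfl fun l _ => ?_
    rw [show i + (j + 1) - k = i + j - k + 1 by ring]
  rw [hc1, hc2]
  unfold c
  rw [← sub_eq_zero, Finset.mul_sum, Finset.mul_sum, Finset.mul_sum,
      ← Finset.sum_add_distrib, ← Finset.sum_sub_distrib]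
  rw [Finset.sum_congr rfl key, Finset.sum_range_sub' f (k.toNat + 1)]
  have h0 : f 0 = 0 := by simp [hf]
  have hlast : f (k.toNat + 1) = 0 := by
    have hz : C (m - ((k.toNat + 1 : ℕ) : ℤ)) (k - ((k.toNat + 1 : ℕ) : ℤ)) = 0 :=
      C_of_neg (by omega)
    simp only [hf, hz, mul_zero, zero_mul, neg_zero]
  rw [h0, hlast, sub_zero]
end

section
/- (First outer recurrence.) For integers m, n, k with m, n ≥ 1 and 1 ≤ k ≤ min(m−1, n), and integers i, j with 0 ≤ i ≤ m, 1 ≤ j ≤ n and k ≤ i+j ≤ m+n−k, one has c_{m,n,k}(i, j) = c_{m−1,n,k}(i, j) + c_{m−1,n−1,k−1}(i, j−1). -/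
lemma C_eq_choose (a b : ℤ) (ha : 0 ≤ a) (hb : 0 ≤ b) :
    C a b = (a.toNat.choose b.toNat : ℤ) := by
  unfold C
  split
  · rfl
  · rename_i h
    rw [Nat.choose_eq_zero_of_lt (by omega)]
    simp

lemma C_pascal (a b : ℤ) (hb : 0 ≤ b) (ha : b + 1 ≤ a) :
    C a b = C (a - 1) b + C (a - 1) (b - 1) := by
  rw [C_eq_choose a b (by omega) hb, C_eq_choose (a - 1) b (by omega) hb]
  rcases eq_or_lt_of_le hb with h0 | h1
  · have : C (a - 1) (b - 1) = 0 := by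
      unfold C
      rw [if_neg (by omega)]
    rw [this, ← h0]
    simp
  · rw [C_eq_choose (a - 1) (b - 1) (by omega) (by omega)]
    have h2 : a.toNat = (a - 1).toNat + 1 := by omega
    have h3 : b.toNat = (b - 1).toNat + 1 := by omega
    rw [h2, h3, Nat.choose_succ_succ]
    push_cast
    ring

theorem outer_recurrence_first (m n k i j : ℤ)
    (hm : 1 ≤ m) (hn : 1 ≤ n) (hk1 : 1 ≤ k) (hkm : k ≤ m - 1) (hkn : k ≤ n)
    (hi0 : 0 ≤ i) (him : i ≤ m) (hj1 : 1 ≤ j) (hjn : j ≤ n)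
    (hij1 : k ≤ i + j) (hij2 : i + j ≤ m + n - k) :
    c m n k i j = c (m - 1) n k i j + c (m - 1) (n - 1) (k - 1) i (j - 1) := by
  have hK : ((k.toNat : ℤ)) = k := Int.toNat_of_nonneg (by omega)
  have hK1 : (k - 1).toNat + 1 = k.toNat := by omega
  unfold c
  rw [hK1]
  have step : ∀ l ∈ Finset.range (k.toNat + 1),
      (-1:ℤ)^l * C (i+j-k) (i-l) * C (m-l) (k-l) * C (n-k+l) l
      = (-1:ℤ)^l * C (i+j-k) (i-l) * C (m-1-l) (k-l) * C (n-k+l) l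
        + (-1:ℤ)^l * C (i+(j-1)-(k-1)) (i-l) * C (m-1-l) (k-1-l) * C (n-1-(k-1)+l) l := by
    intro l hl
    rw [Finset.mem_range] at hl
    have hlk : (l : ℤ) ≤ k := by omega
    have hp := C_pascal (m - l) (k - l) (by omega) (by omega)
    rw [show m - l - 1 = m - 1 - (l:ℤ) by ring, show k - l - 1 = k - 1 - (l:ℤ) by ring] at hp
    rw [hp, show i+(j-1)-(k-1) = i+j-k by ring, show n-1-(k-1)+l = n-k+(l:ℤ) by ring]
    ring
  rw [Finset.sum_congr rfl step, Finset.sum_add_distrib]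
  congr 1
  rw [Finset.sum_range_succ]
  have hz : C (m - 1 - (k.toNat : ℤ)) (k - 1 - (k.toNat : ℤ)) = 0 := by
    unfold C
    rw [if_neg (by omega)]
  rw [hz]
  ring
end

section
/- (Fourth outer recurrence.) For integers m, n, k with m, n ≥ 0 and 0 ≤ k ≤ min(m, n) with k+1 ≤ min(m+1, n) and k+1 ≤ min(m, n+1), and integers i, j with 0 ≤ i ≤ m, 0 ≤ j ≤ n and k+1 ≤ i+j ≤ m+n−k−1, one has c_{m,n,k}(i, j) = c_{m+1,n,k+1}(i, j) − c_{m,n+1,k+1}(i, j). -/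
lemma C_neg (a b : ℤ) (hb : b < 0) : C a b = 0 := by
  simp only [C, if_neg (by omega : ¬(0 ≤ b ∧ b ≤ a))]

lemma pascalC (a b : ℤ) (ha : 0 ≤ a) : C (a+1) b = C a b + C a (b-1) := by
  unfold C
  rcases lt_or_ge b 0 with hb | hb
  · rw [if_neg (by omega), if_neg (by omega), if_neg (by omega)]; ring
  rcases eq_or_lt_of_le hb with hb0 | hb1
  · rw [if_pos (by omega), if_pos (by omega), if_neg (by omega)]
    rw [show b.toNat = 0 by omega]
    simp
  · rcases lt_or_ge a b with hab | hab
    · rcases eq_or_lt_of_le (by omega : a + 1 ≤ b) with hb2 | hb2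
      · rw [if_pos (by omega), if_neg (by omega), if_pos (by omega)]
        rw [show b.toNat = a.toNat + 1 by omega, show (b-1).toNat = a.toNat by omega,
            show (a+1).toNat = a.toNat + 1 by omega, Nat.choose_self, Nat.choose_self]
        simp
      · rw [if_neg (by omega), if_neg (by omega), if_neg (by omega)]; ring
    · rw [if_pos (by omega), if_pos (by omega), if_pos (by omega)]
      obtain ⟨x, hx⟩ : ∃ x:ℕ, a = x := ⟨a.toNat, by omega⟩
      obtain ⟨y, hy⟩ : ∃ y:ℕ, b = y+1 := ⟨(b-1).toNat, by omega⟩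
      subst hx hy
      rw [show ((x:ℤ)+1).toNat = x+1 by omega, show ((y:ℤ)+1).toNat = y+1 by omega,
          show ((y:ℤ)+1-1).toNat = y by omega, show ((x:ℤ)).toNat = x by omega]
      rw [Nat.choose_succ_succ]
      push_cast; ring

theorem outer_recurrence_fourth (m n k i j : ℤ)
    (hm : 0 ≤ m) (hn : 0 ≤ n) (hk0 : 0 ≤ k) (hkm : k ≤ m) (hkn : k ≤ n)
    (hk1 : k + 1 ≤ min (m + 1) n) (hk2 : k + 1 ≤ min m (n + 1))
    (hi0 : 0 ≤ i) (him : i ≤ m) (hj0 : 0 ≤ j) (hjn : j ≤ n)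
    (hij1 : k + 1 ≤ i + j) (hij2 : i + j ≤ m + n - k - 1) :
    c m n k i j = c (m + 1) n (k + 1) i j - c m (n + 1) (k + 1) i j := by
  have hm1 : k + 1 ≤ m := le_trans hk2 (min_le_left m (n+1))
  have hn1 : k + 1 ≤ n := le_trans hk1 (min_le_right (m+1) n)
  have ha : 0 ≤ i + j - k - 1 := by linarith
  unfold c
  rw [show (k+1).toNat + 1 = k.toNat + 1 + 1 by omega]
  set K := k.toNat with hKdef
  have hkK : (K : ℤ) = k := Int.toNat_of_nonneg hk0
  set P : ℕ → ℤ := fun l =>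
    (-1:ℤ)^l * C (i+j-k-1) (i-l) * C (m-l) (k-l) * C (n-k-1+l) l with hP
  set Q : ℕ → ℤ := fun l =>
    (-1:ℤ)^l * C (i+j-k-1) (i-l) * C (m-l) (k+1-l) * C (n-k-1+l) ((l:ℤ)-1) with hQ
  set A : ℕ → ℤ := fun l =>
    (-1:ℤ)^l * C (i+j-k-1) (i-l) * C (m-l) (k-l) * C (n-k-1+l) ((l:ℤ)-1) with hA
  -- RHS transformation
  have hgh : ∀ l ∈ Finset.range (K+1+1),
      (-1:ℤ)^l * C (i+j-(k+1)) (i-l) * C (m+1-l) (k+1-l) * C (n-(k+1)+l) l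
      - (-1:ℤ)^l * C (i+j-(k+1)) (i-l) * C (m-l) (k+1-l) * C (n+1-(k+1)+l) l
      = P l - Q l := by
    intro l hl
    rw [Finset.mem_range] at hl
    have hl' : (l:ℤ) ≤ k + 1 := by omega
    have e1 : C (m+1-(l:ℤ)) (k+1-l) = C (m-l) (k+1-l) + C (m-l) (k-l) := by
      have h := pascalC (m-l) (k+1-l) (by linarith)
      rw [show m+1-(l:ℤ) = m-l+1 by ring, h, show k+1-(l:ℤ)-1 = k-l by ring]
    have e2 : C (n+1-(k+1)+(l:ℤ)) l = C (n-k-1+l) l + C (n-k-1+l) ((l:ℤ)-1) := by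
      have h := pascalC (n-k-1+l) l (by push_cast; omega)
      rw [show n+1-(k+1)+(l:ℤ) = n-k-1+l+1 by ring, h]
    rw [e1, e2, show i+j-(k+1) = i+j-k-1 by ring, show n-(k+1)+(l:ℤ) = n-k-1+l by ring]
    simp only [hP, hQ]
    ring
  have hPtop : P (K+1) = 0 := by
    have h0 : C (m - ((K:ℤ)+1)) (k - ((K:ℤ)+1)) = 0 := C_neg _ _ (by omega)
    simp only [hP]
    push_cast
    rw [h0]
    ring
  have hQ0 : Q 0 = 0 := by
    have h0 : C (n-k-1+((0:ℕ):ℤ)) (((0:ℕ):ℤ)-1) = 0 := C_neg _ _ (by omega)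
    simp only [hQ]
    rw [h0]
    ring
  have hRHS : (∑ l ∈ Finset.range (K+1+1),
      (-1:ℤ)^l * C (i+j-(k+1)) (i-l) * C (m+1-l) (k+1-l) * C (n-(k+1)+l) l)
      - ∑ l ∈ Finset.range (K+1+1),
      (-1:ℤ)^l * C (i+j-(k+1)) (i-l) * C (m-l) (k+1-l) * C (n+1-(k+1)+l) l
      = ∑ l ∈ Finset.range (K+1), (P l - Q (l+1)) := by
    rw [← Finset.sum_sub_distrib, Finset.sum_congr rfl hgh, Finset.sum_sub_distrib,
        Finset.sum_range_succ P, Finset.sum_range_succ' Q (K+1), hPtop, hQ0,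
        add_zero, add_zero, ← Finset.sum_sub_distrib]
  rw [hRHS]
  -- LHS transformation
  have hf : ∀ l ∈ Finset.range (K+1),
      (-1:ℤ)^l * C (i+j-k) (i-l) * C (m-l) (k-l) * C (n-k+l) l
      = (P l - Q (l+1)) + (A l - A (l+1)) := by
    intro l hl
    rw [Finset.mem_range] at hl
    have hl' : (l:ℤ) ≤ k := by omega
    have e1 : C (i+j-k) (i-(l:ℤ)) = C (i+j-k-1) (i-l) + C (i+j-k-1) (i-l-1) := by
      have h := pascalC (i+j-k-1) (i-l) ha
      conv_lhs => rw [show i+j-k = i+j-k-1+1 by ring, h]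
    have e2 : C (n-k+(l:ℤ)) l = C (n-k-1+l) l + C (n-k-1+l) ((l:ℤ)-1) := by
      have h := pascalC (n-k-1+l) l (by push_cast; omega)
      rw [show n-k+(l:ℤ) = n-k-1+l+1 by ring, h]
    have e3 : C (m-(l:ℤ)) (k-l) = C (m-l-1) (k-l) + C (m-l-1) (k-l-1) := by
      have h := pascalC (m-l-1) (k-l) (by linarith)
      conv_lhs => rw [show m-(l:ℤ) = m-l-1+1 by ring, h]
    have hQ1 : Q (l+1) = (-1:ℤ)^(l+1) * C (i+j-k-1) (i-l-1) * C (m-l-1) (k-l)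
        * (C (n-k-1+l) l + C (n-k-1+l) ((l:ℤ)-1)) := by
      simp only [hQ]
      push_cast
      rw [show i-((l:ℤ)+1) = i-l-1 by ring, show m-((l:ℤ)+1) = m-l-1 by ring,
          show k+1-((l:ℤ)+1) = k-l by ring, show n-k-1+((l:ℤ)+1) = n-k+l by ring,
          show (l:ℤ)+1-1 = (l:ℤ) by ring, e2]
    have hA1 : A (l+1) = (-1:ℤ)^(l+1) * C (i+j-k-1) (i-l-1) * C (m-l-1) (k-l-1)
        * (C (n-k-1+l) l + C (n-k-1+l) ((l:ℤ)-1)) := by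
      simp only [hA]
      push_cast
      rw [show i-((l:ℤ)+1) = i-l-1 by ring, show m-((l:ℤ)+1) = m-l-1 by ring,
          show k-((l:ℤ)+1) = k-l-1 by ring, show n-k-1+((l:ℤ)+1) = n-k+l by ring,
          show (l:ℤ)+1-1 = (l:ℤ) by ring, e2]
    rw [e1, e2, hQ1, hA1]
    simp only [hP, hA]
    rw [e3]
    ring
  rw [Finset.sum_congr rfl hf, Finset.sum_add_distrib, Finset.sum_range_sub' A (K+1)]
  have hA0 : A 0 = 0 := by
    have h0 : C (n-k-1+((0:ℕ):ℤ)) (((0:ℕ):ℤ)-1) = 0 := C_neg _ _ (by omega)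
    simp only [hA]
    rw [h0]
    ring
  have hAtop : A (K+1) = 0 := by
    have h0 : C (m - ((K:ℤ)+1)) (k - ((K:ℤ)+1)) = 0 := C_neg _ _ (by omega)
    simp only [hA]
    push_cast
    rw [h0]
    ring
  rw [hA0, hAtop]
  ring
end

section
/- (C12 Regge symmetry / tensor transpose.) For integers m, n, k with m, n ≥ 0 and 0 ≤ k ≤ min(m, n), and integers i, j with 0 ≤ i ≤ m, 0 ≤ j ≤ n and k ≤ i+j ≤ m+n−k, one has c_{n,m,k}(j, i) = (-1)^k · c_{m,n,k}(i, j). -/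
lemma C_symm (a b : ℤ) (ha : 0 ≤ a) : C a b = C a (a - b) := by
  unfold C
  by_cases hb : 0 ≤ b ∧ b ≤ a
  · rw [if_pos hb, if_pos (by omega)]
    have h1 : (a - b).toNat = a.toNat - b.toNat := by omega
    have h2 : b.toNat ≤ a.toNat := by omega
    rw [h1, Nat.choose_symm h2]
  · rw [if_neg hb, if_neg (by omega)]

theorem regge_C12_symmetry (m n k i j : ℤ)
    (hm : 0 ≤ m) (hn : 0 ≤ n) (hk0 : 0 ≤ k) (hkm : k ≤ m) (hkn : k ≤ n)
    (hi0 : 0 ≤ i) (him : i ≤ m) (hj0 : 0 ≤ j) (hjn : j ≤ n)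
    (hij1 : k ≤ i + j) (hij2 : i + j ≤ m + n - k) :
    c n m k j i = (-1 : ℤ) ^ k.toNat * c m n k i j := by
  rw [c, c, ← Finset.sum_range_reflect, Finset.mul_sum]
  apply Finset.sum_congr rfl
  intro l hl
  simp only [Finset.mem_range] at hl
  have hlK : l ≤ k.toNat := by omega
  have hcast : ((k.toNat + 1 - 1 - l : ℕ) : ℤ) = k - l := by omega
  have hKl : k.toNat + 1 - 1 - l = k.toNat - l := by omega
  rw [hcast, hKl]
  have hpow : ((-1 : ℤ)) ^ (k.toNat - l) = (-1) ^ k.toNat * (-1) ^ l := by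
    have h1 : ((-1 : ℤ)) ^ (k.toNat - l) * (-1) ^ l = (-1) ^ k.toNat := by
      rw [← pow_add, Nat.sub_add_cancel hlK]
    have h2 : ((-1 : ℤ)) ^ l * (-1) ^ l = 1 := by
      rw [← pow_add, ← two_mul, pow_mul]; norm_num
    calc ((-1 : ℤ)) ^ (k.toNat - l)
        = ((-1 : ℤ)) ^ (k.toNat - l) * ((-1) ^ l * (-1) ^ l) := by rw [h2, mul_one]
      _ = (((-1 : ℤ)) ^ (k.toNat - l) * (-1) ^ l) * (-1) ^ l := by ring
      _ = (-1) ^ k.toNat * (-1) ^ l := by rw [h1]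
  rw [hpow,
    show j + i - k = i + j - k from by ring,
    show j - (k - (l : ℤ)) = (i + j - k) - (i - l) from by ring,
    ← C_symm _ _ (by omega),
    show n - (k - (l : ℤ)) = n - k + l from by ring,
    show k - (k - (l : ℤ)) = (l : ℤ) from by ring,
    show m - k + (k - (l : ℤ)) = m - l from by ring]
  ring
end
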